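/- If q is not a root of unity, the representations π_{rs} and π_{r's'} of U_q(m_2) (with r,s,r',s' nonzero complex numbers) are equivalent if and only if r' = ±r and s' = q^n s for some integer n. -/

import Mathlib

noncomputable section

/-- The basis vector |m⟩, m ∈ ℤ. -/
def e (m : ℤ) : ℤ →₀ ℂ := Finsupp.single m 1

/-- A linear operator on the space with basis {|m⟩ : m ∈ ℤ}, given by its values on
the basis vectors. -/
def op (f : ℤ → (ℤ →₀ ℂ)) : (ℤ →₀ ℂ) →ₗ[ℂ] (ℤ →₀ ℂ) :=
  Finsupp.lift _ _ _ f

/-- π(q^H)|m⟩ = sqᵐ|m⟩. -/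
def piK (q s : ℂ) : (ℤ →₀ ℂ) →ₗ[ℂ] (ℤ →₀ ℂ) := op fun m => (s * q ^ m) • e m

/-- π(q^{-H})|m⟩ = s⁻¹q⁻ᵐ|m⟩. -/
def piKinv (q s : ℂ) : (ℤ →₀ ℂ) →ₗ[ℂ] (ℤ →₀ ℂ) := op fun m => (s⁻¹ * q ^ (-m)) • e m

/-- π(E)|m⟩ = r|m+1⟩. -/
def piE (r : ℂ) : (ℤ →₀ ℂ) →ₗ[ℂ] (ℤ →₀ ℂ) := op fun m => r • e (m + 1)

/-- π(F)|m⟩ = r|m-1⟩. -/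
def piF (r : ℂ) : (ℤ →₀ ℂ) →ₗ[ℂ] (ℤ →₀ ℂ) := op fun m => r • e (m - 1)

end

/-!
Since `π(E)π(F)` acts as `r²`, an intertwiner forces `r'² = r²`. An intertwiner also maps the
eigenvector `|m⟩` of `π_{rs}(q^H)`, with eigenvalue `sqᵐ`, to an eigenvector of `π_{r's'}(q^H)`,
whose eigenvalues are the numbers `s'qᵏ`; hence `s = s'qᵏ`. Conversely, the shift
`|m⟩ ↦ |m - n⟩` intertwines `π_{rs}` with `π_{r,qⁿs}`, and the sign twist `|m⟩ ↦ (-1)ᵐ|m⟩`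
intertwines `π_{rs}` with `π_{-r,s}`.
-/

noncomputable section

abbrev V := ℤ →₀ ℂ

lemma ext_e {φ ψ : V →ₗ[ℂ] V} (h : ∀ m, φ (e m) = ψ (e m)) : φ = ψ :=
  Finsupp.basisSingleOne.ext h

lemma e_ne_zero (m : ℤ) : e m ≠ 0 :=
  Finsupp.single_ne_zero.mpr one_ne_zero

lemma op_e (f : ℤ → V) (m : ℤ) : op f (e m) = f m := by
  simp [op, e]

@[simp] lemma piK_e (q s : ℂ) (m : ℤ) : piK q s (e m) = (s * q ^ m) • e m := op_e _ m

@[simp] lemma piKinv_e (q s : ℂ) (m : ℤ) : piKinv q s (e m) = (s⁻¹ * q ^ (-m)) • e m := op_e _ m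

@[simp] lemma piE_e (r : ℂ) (m : ℤ) : piE r (e m) = r • e (m + 1) := op_e _ m

@[simp] lemma piF_e (r : ℂ) (m : ℤ) : piF r (e m) = r • e (m - 1) := op_e _ m

lemma piK_apply (q s : ℂ) (v : V) (k : ℤ) : piK q s v k = s * q ^ k * v k := by
  induction v using Finsupp.induction_linear with
  | zero => simp
  | add v w hv hw => simp [hv, hw, mul_add]
  | single m c =>
    rw [← mul_one c, ← smul_eq_mul, ← Finsupp.smul_single, ← e, map_smul, piK_e]
    by_cases h : m = k <;> simp [e, h, mul_comm, mul_left_comm]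

lemma piE_piF (r : ℂ) (x : V) : piE r (piF r x) = (r * r) • x :=
  LinearMap.congr_fun (ext_e (φ := piE r ∘ₗ piF r) (ψ := (r * r) • LinearMap.id)
    fun m => by simp [smul_smul]) x

structure Intertwines (q r s r' s' : ℂ) (A : V →ₗ[ℂ] V) : Prop where
  comm_K : ∀ x, A (piK q s x) = piK q s' (A x)
  comm_Kinv : ∀ x, A (piKinv q s x) = piKinv q s' (A x)
  comm_E : ∀ x, A (piE r x) = piE r' (A x)
  comm_F : ∀ x, A (piF r x) = piF r' (A x)

namespace Intertwines

variable {q r s r' s' r'' s'' : ℂ} {A B : V →ₗ[ℂ] V}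

lemma of_e (hK : ∀ m, A (piK q s (e m)) = piK q s' (A (e m)))
    (hKinv : ∀ m, A (piKinv q s (e m)) = piKinv q s' (A (e m)))
    (hE : ∀ m, A (piE r (e m)) = piE r' (A (e m)))
    (hF : ∀ m, A (piF r (e m)) = piF r' (A (e m))) : Intertwines q r s r' s' A where
  comm_K := LinearMap.congr_fun (ext_e (φ := A ∘ₗ piK q s) (ψ := piK q s' ∘ₗ A) hK)
  comm_Kinv := LinearMap.congr_fun (ext_e (φ := A ∘ₗ piKinv q s) (ψ := piKinv q s' ∘ₗ A) hKinv)
  comm_E := LinearMap.congr_fun (ext_e (φ := A ∘ₗ piE r) (ψ := piE r' ∘ₗ A) hE)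
  comm_F := LinearMap.congr_fun (ext_e (φ := A ∘ₗ piF r) (ψ := piF r' ∘ₗ A) hF)

lemma comp (hB : Intertwines q r' s' r'' s'' B) (hA : Intertwines q r s r' s' A) :
    Intertwines q r s r'' s'' (B ∘ₗ A) where
  comm_K x := by simp only [LinearMap.comp_apply, hA.comm_K, hB.comm_K]
  comm_Kinv x := by simp only [LinearMap.comp_apply, hA.comm_Kinv, hB.comm_Kinv]
  comm_E x := by simp only [LinearMap.comp_apply, hA.comm_E, hB.comm_E]
  comm_F x := by simp only [LinearMap.comp_apply, hA.comm_F, hB.comm_F]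

lemma mul_self_eq (hA : Intertwines q r s r' s' A) (hA0 : A ≠ 0) : r' * r' = r * r := by
  obtain ⟨x, hx⟩ : ∃ x, A x ≠ 0 := by
    by_contra! h
    exact hA0 (LinearMap.ext h)
  have h : (r * r) • A x = (r' * r') • A x := by
    rw [← map_smul, ← piE_piF, hA.comm_E, hA.comm_F, piE_piF]
  exact (smul_left_injective ℂ hx h).symm

lemma exists_eq_zpow_mul (hq : q ≠ 0) (hA : Intertwines q r s r' s' A) (hA0 : A ≠ 0) :
    ∃ n : ℤ, s' = q ^ n * s := by
  obtain ⟨m, hm⟩ : ∃ m, A (e m) ≠ 0 := by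
    by_contra! h
    exact hA0 (ext_e (by simpa using h))
  obtain ⟨k, hk⟩ : ∃ k, A (e m) k ≠ 0 := by
    by_contra! h
    exact hm (Finsupp.ext h)
  -- `A (e m)` is an eigenvector of `piK q s'` with eigenvalue `s * q ^ m`; read this at `k`.
  have h := congr_arg (· k) (hA.comm_K (e m))
  simp only [piK_e, map_smul, Finsupp.smul_apply, smul_eq_mul, piK_apply] at h
  refine ⟨m - k, ?_⟩
  rw [zpow_sub₀ hq, div_mul_eq_mul_div, eq_div_iff (zpow_ne_zero k hq)]
  exact (mul_right_cancel₀ hk h).symm.trans (by ring)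

end Intertwines

def shift (n : ℤ) : V ≃ₗ[ℂ] V := Finsupp.domLCongr (Equiv.subRight n)

@[simp] lemma shift_e (n m : ℤ) : shift n (e m) = e (m - n) := by
  simp [shift, e]

lemma intertwines_shift {q : ℂ} (hq : q ≠ 0) (r s : ℂ) (n : ℤ) :
    Intertwines q r s r (q ^ n * s) (shift n) := by
  refine .of_e (fun m => ?_) (fun m => ?_) (fun m => ?_) (fun m => ?_)
  · simp only [LinearEquiv.coe_coe, piK_e, map_smul, shift_e]
    rw [zpow_sub₀ hq]
    field_simp
  · simp only [LinearEquiv.coe_coe, piKinv_e, map_smul, shift_e]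
    rw [neg_sub, zpow_sub₀ hq, zpow_neg, mul_inv]
    field_simp
  · simp [sub_add_eq_add_sub]
  · simp [sub_right_comm]

def signTwist (ε : ℂ) : V →ₗ[ℂ] V := op fun m => ε ^ m • e m

@[simp] lemma signTwist_e (ε : ℂ) (m : ℤ) : signTwist ε (e m) = ε ^ m • e m := op_e _ m

lemma signTwist_involutive {ε : ℂ} (hε : ε * ε = 1) : Function.Involutive (signTwist ε) :=
  LinearMap.congr_fun (ext_e (φ := signTwist ε ∘ₗ signTwist ε) (ψ := LinearMap.id)
    fun m => by simp [smul_smul, ← mul_zpow, hε])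

lemma intertwines_signTwist {ε : ℂ} (hε : ε * ε = 1) (q r s : ℂ) :
    Intertwines q r s (ε * r) s (signTwist ε) := by
  have hε0 : ε ≠ 0 := left_ne_zero_of_mul_eq_one hε
  refine .of_e (fun m => ?_) (fun m => ?_) (fun m => ?_) (fun m => ?_)
  · simp [smul_smul, mul_comm]
  · simp [smul_smul, mul_comm]
  · simp only [piE_e, signTwist_e, map_smul, smul_smul, zpow_add_one₀ hε0]
    ring_nf
  · simp only [piF_e, signTwist_e, map_smul, smul_smul, zpow_sub_one₀ hε0,
      inv_eq_of_mul_eq_one_right hε]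
    ring_nf

end

theorem stmt16_general (q r s r' s' : ℂ) (hq : q ≠ 0) :
    (∃ A : (ℤ →₀ ℂ) ≃ₗ[ℂ] (ℤ →₀ ℂ),
        (∀ x, A (piK q s x) = piK q s' (A x)) ∧
        (∀ x, A (piKinv q s x) = piKinv q s' (A x)) ∧
        (∀ x, A (piE r x) = piE r' (A x)) ∧
        (∀ x, A (piF r x) = piF r' (A x))) ↔
    (r' = r ∨ r' = -r) ∧ ∃ n : ℤ, s' = q ^ n * s := by
  constructor
  · rintro ⟨A, hK, hKinv, hE, hF⟩
    have hA : Intertwines q r s r' s' A := ⟨hK, hKinv, hE, hF⟩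
    have hA0 : (A : V →ₗ[ℂ] V) ≠ 0 := fun h =>
      e_ne_zero 0 (A.injective (by simpa using LinearMap.congr_fun h (e 0)))
    exact ⟨mul_self_eq_mul_self_iff.mp (hA.mul_self_eq hA0), hA.exists_eq_zpow_mul hq hA0⟩
  · rintro ⟨hsign, n, rfl⟩
    obtain ⟨ε, hε, rfl⟩ : ∃ ε : ℂ, ε * ε = 1 ∧ r' = ε * r := by
      rcases hsign with rfl | rfl
      exacts [⟨1, by simp⟩, ⟨-1, by simp⟩]
    let A := (LinearEquiv.ofInvolutive _ (signTwist_involutive hε)).trans (shift n)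
    have hA : Intertwines q r s (ε * r) (q ^ n * s) A :=
      (intertwines_shift hq (ε * r) s n).comp (intertwines_signTwist hε q r s)
    exact ⟨A, hA.comm_K, hA.comm_Kinv, hA.comm_E, hA.comm_F⟩

/-- For q not a root of unity, the representations π_{rs} and π_{r's'}
of U_q(m₂) are equivalent (there is a linear isomorphism of the representation space
intertwining the actions of the generators) if and only if r' = ±r and s' = qⁿs for
some integer n. -/
theorem stmt16 (q r s r' s' : ℂ) (hq : q ≠ 0)
    (hroot : ∀ n : ℕ, n ≠ 0 → q ^ n ≠ 1)
    (hr : r ≠ 0) (hs : s ≠ 0) (hr' : r' ≠ 0) (hs' : s' ≠ 0) :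
    (∃ A : (ℤ →₀ ℂ) ≃ₗ[ℂ] (ℤ →₀ ℂ),
        (∀ x, A (piK q s x) = piK q s' (A x)) ∧
        (∀ x, A (piKinv q s x) = piKinv q s' (A x)) ∧
        (∀ x, A (piE r x) = piE r' (A x)) ∧
        (∀ x, A (piF r x) = piF r' (A x))) ↔
    (r' = r ∨ r' = -r) ∧ ∃ n : ℤ, s' = q ^ n * s :=
  stmt16_general q r s r' s' hq
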